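/- arXiv:2403.05439 — 2 statements merged into one kernel-verified Lean document; each statement's English description precedes it below -/
import Mathlib

section
/- Let G be a finite simple graph, v a vertex of G, and G' = G − v the induced subgraph obtained by deleting v and all edges incident to v. Let σ be a Scarf face of I(G') and let w_1, …, w_t (t ≥ 1) be distinct elements of N_G(v). If there exists an edge e ∈ σ such that dist_G(e, vw_i) = 1 for some 1 ≤ i ≤ t, then σ ∪ {vw_1, …, vw_t} is not a Scarf face of I(G). -/
/-- The monomial (exponent vector) of an edge: `1` on its endpoints, `0` elsewhere. -/
def edgeMon {V : Type*} [DecidableEq V] (e : Sym2 V) : V → ℕ :=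
  fun x => if x ∈ e then 1 else 0

/-- The lcm (componentwise max) of the monomials of a finite set of edges. -/
def eLcm {V : Type*} [DecidableEq V] (σ : Finset (Sym2 V)) : V → ℕ :=
  σ.sup edgeMon

/-- `σ` is a Scarf face of the edge ideal `I(G)`, identified with a set of edges of `G`:
its lcm is distinct from the lcm of any other set of edges of `G`. -/
def IsScarf {V : Type*} [DecidableEq V] (G : SimpleGraph V) (σ : Finset (Sym2 V)) : Prop :=
  (∀ e ∈ σ, e ∈ G.edgeSet) ∧
    ∀ τ : Finset (Sym2 V), (∀ e ∈ τ, e ∈ G.edgeSet) → eLcm τ = eLcm σ → τ = σ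

/-- `dist_G(e, f) = 0`: the two edges share a vertex. -/
def Dist0 {V : Type*} (e f : Sym2 V) : Prop := ∃ x, x ∈ e ∧ x ∈ f

/-- `dist_G(e, f) = 1`: the edges are vertex-disjoint, but some endpoint of `e` is
adjacent in `G` to some endpoint of `f`. -/
def Dist1 {V : Type*} (G : SimpleGraph V) (e f : Sym2 V) : Prop :=
  ¬ Dist0 e f ∧ ∃ x ∈ e, ∃ y ∈ f, G.Adj x y

/-- The graph `G - v`: delete the vertex `v`, i.e. all edges incident to `v`
(keeping the vertex set). -/
def delVert {V : Type*} (G : SimpleGraph V) (v : V) : SimpleGraph V where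
  Adj x y := G.Adj x y ∧ x ≠ v ∧ y ≠ v
  symm := ⟨fun x y h => ⟨h.1.symm, h.2.2, h.2.1⟩⟩
  loopless := ⟨fun x h => G.loopless.irrefl x h.1⟩

/-!
Two edges `e, f` at distance one in `G` are joined by an edge `xy` of `G` with `x ∈ e`, `y ∈ f`,
and `xy` differs from both. Its monomial divides `lcm(e, f)`, so adding `xy` to a set of edges
containing `e` and `f`, or removing it, does not change the lcm. Hence no Scarf face of `I(G)`
contains two edges at distance one, and `vw_i ∈ σ ∪ {vw_1, …, vw_t}` is such a pair with `e`.
-/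

section

variable {V : Type*} [DecidableEq V]

lemma edgeMon_mk_le_sup {x y : V} {e f : Sym2 V} (hx : x ∈ e) (hy : y ∈ f) :
    edgeMon s(x, y) ≤ edgeMon e ⊔ edgeMon f := by
  intro z
  by_cases hz : z ∈ s(x, y)
  · rcases Sym2.mem_iff.mp hz with rfl | rfl <;> simp [edgeMon, hx, hy]
  · simp [edgeMon, hz]

lemma edgeMon_le_eLcm_of_mem {x y : V} {e f : Sym2 V} {T : Finset (Sym2 V)}
    (he : e ∈ T) (hf : f ∈ T) (hx : x ∈ e) (hy : y ∈ f) :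
    edgeMon s(x, y) ≤ eLcm T :=
  (edgeMon_mk_le_sup hx hy).trans (sup_le (Finset.le_sup he) (Finset.le_sup hf))

lemma eLcm_insert_of_le {f : Sym2 V} {T : Finset (Sym2 V)} (h : edgeMon f ≤ eLcm T) :
    eLcm (insert f T) = eLcm T := by
  simp only [eLcm, Finset.sup_insert]
  exact sup_eq_right.mpr h

lemma IsScarf.not_edgeMon_le_eLcm_erase {G : SimpleGraph V} {S : Finset (Sym2 V)}
    (hS : IsScarf G S) {f : Sym2 V} (hfG : f ∈ G.edgeSet) :
    ¬ edgeMon f ≤ eLcm (S.erase f) := by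
  intro hle
  by_cases hf : f ∈ S
  · have hlcm : eLcm (S.erase f) = eLcm S := by
      rw [← eLcm_insert_of_le hle, Finset.insert_erase hf]
    have heq := hS.2 _ (fun g hg => hS.1 g (Finset.mem_of_mem_erase hg)) hlcm
    exact Finset.notMem_erase f S (heq.symm ▸ hf)
  · rw [Finset.erase_eq_of_notMem hf] at hle
    have hτ : ∀ g ∈ insert f S, g ∈ G.edgeSet := by
      intro g hg
      rcases Finset.mem_insert.mp hg with rfl | hg
      exacts [hfG, hS.1 g hg]
    exact hf (hS.2 _ hτ (eLcm_insert_of_le hle) ▸ Finset.mem_insert_self f S)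

lemma IsScarf.not_dist1 {G : SimpleGraph V} {S : Finset (Sym2 V)} (hS : IsScarf G S)
    {e f : Sym2 V} (he : e ∈ S) (hf : f ∈ S) : ¬ Dist1 G e f := by
  rintro ⟨hdisj, x, hx, y, hy, hxy⟩
  have hxf : x ∉ f := fun h => hdisj ⟨x, hx, h⟩
  have hye : y ∉ e := fun h => hdisj ⟨y, h, hy⟩
  have he' : e ∈ S.erase s(x, y) :=
    Finset.mem_erase.mpr ⟨fun h => hye (h ▸ Sym2.mem_mk_right x y), he⟩
  have hf' : f ∈ S.erase s(x, y) :=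
    Finset.mem_erase.mpr ⟨fun h => hxf (h ▸ Sym2.mem_mk_left x y), hf⟩
  exact hS.not_edgeMon_le_eLcm_erase (G.mem_edgeSet.mpr hxy)
    (edgeMon_le_eLcm_of_mem he' hf' hx hy)

end

theorem stmt7_general {V : Type*} [DecidableEq V] (G : SimpleGraph V) (v : V)
    (W : Finset V) (σ : Finset (Sym2 V))
    (hex : ∃ e ∈ σ, ∃ w ∈ W, Dist1 G e s(v, w)) :
    ¬ IsScarf G (σ ∪ W.image (fun w => s(v, w))) := by
  intro hS
  obtain ⟨e, he, w, hw, hdist⟩ := hex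
  exact hS.not_dist1 (Finset.mem_union_left _ he)
    (Finset.mem_union_right _ (Finset.mem_image_of_mem _ hw)) hdist

theorem stmt7 {V : Type*} [Fintype V] [DecidableEq V] (G : SimpleGraph V) (v : V)
    (W : Finset V) (hW : ∀ w ∈ W, G.Adj v w) (hWne : W.Nonempty)
    (σ : Finset (Sym2 V)) (hσ : IsScarf (delVert G v) σ)
    (hex : ∃ e ∈ σ, ∃ w ∈ W, Dist1 G e s(v, w)) :
    ¬ IsScarf G (σ ∪ W.image (fun w => s(v, w))) :=
  stmt7_general G v W σ hex
end

section
/- Let G be a finite simple graph, v a vertex of G, and G' = G − v the induced subgraph obtained by deleting v and all edges incident to v. Let σ be a Scarf face of I(G') and let w_1, …, w_t (t ≥ 1) be distinct elements of N_G(v). Suppose dist_G(σ, vw_i) = 0 for some 1 ≤ i ≤ t, and dist_G(e, vw_j) ≠ 1 for every e ∈ σ and every 1 ≤ j ≤ t. Then σ ∪ {vw_1, …, vw_t} is a Scarf face of I(G' ∪ {vw_1, …, vw_t}) if and only if t = 1. Here G' ∪ {vw_1, …, vw_t} denotes the subgraph of G obtained from G' by adding back the vertex v and the edges vw_1, …,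 vw_t. -/
/-- The graph `G' ∪ {vw₁, …, vwₜ}`: obtained from `G - v` by adding back the vertex `v`
and the edges `vw` for `w ∈ W`. -/
def addBack {V : Type*} (G : SimpleGraph V) (v : V) (W : Finset V) : SimpleGraph V :=
  SimpleGraph.fromEdgeSet ((delVert G v).edgeSet ∪ {e : Sym2 V | ∃ w ∈ W, e = s(v, w)})


/-!
Since edge monomials are squarefree, the lcm of a set of edges only records which vertices the
edges cover, so a Scarf face is a set of edges that no other set of edges covers exactly as it
does. If `|W| ≥ 2`, the edge `vw` with `w` a vertex of `σ` covers nothing new: `v` is covered by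
another `vw'` and `w` by `σ`, so dropping it keeps the lcm. If `W = {w}`, a competitor `τ` must
contain `vw` (the only edge at `v`), and the rest of `τ` covers the vertices of `σ` except perhaps
`w`. If it misses `w`, then adding back the edge `wu` of `σ` through `w` recovers `σ`, so `u` is
covered by an edge of `σ` avoiding `w` and `v`, which is at distance `1` from `vw`.
-/

section

open Finset

variable {V : Type*}

def coveredVerts (σ : Finset (Sym2 V)) : Set V := {x | ∃ e ∈ σ, x ∈ e}

lemma coveredVerts_mono {σ τ : Finset (Sym2 V)} (h : τ ⊆ σ) : coveredVerts τ ⊆ coveredVerts σ :=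
  fun _ ⟨e, he, hx⟩ => ⟨e, h he, hx⟩

section DecidableEq

variable [DecidableEq V]

lemma mem_coveredVerts_insert {σ : Finset (Sym2 V)} {e : Sym2 V} {x : V} :
    x ∈ coveredVerts (insert e σ) ↔ x ∈ e ∨ x ∈ coveredVerts σ := by
  simp [coveredVerts]

lemma mem_coveredVerts_erase {σ : Finset (Sym2 V)} {e : Sym2 V} {x : V} (hx : x ∉ e) :
    x ∈ coveredVerts (σ.erase e) ↔ x ∈ coveredVerts σ := by
  refine ⟨fun h => coveredVerts_mono (erase_subset e σ) h, fun ⟨f, hf, hxf⟩ => ?_⟩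
  exact ⟨f, mem_erase.2 ⟨fun hfe => hx (hfe ▸ hxf), hf⟩, hxf⟩

lemma eLcm_eq_indicator (σ : Finset (Sym2 V)) : eLcm σ = (coveredVerts σ).indicator 1 := by
  induction σ using Finset.induction_on with
  | empty => funext x; simp [eLcm, coveredVerts]
  | insert e σ _ ih =>
    funext x
    rw [eLcm, sup_insert, Pi.sup_apply, ← eLcm, ih]
    by_cases hxe : x ∈ e <;> by_cases hxσ : x ∈ coveredVerts σ <;>
      simp [edgeMon, mem_coveredVerts_insert, hxe, hxσ]

lemma eLcm_eq_eLcm_iff {σ τ : Finset (Sym2 V)} :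
    eLcm τ = eLcm σ ↔ coveredVerts τ = coveredVerts σ := by
  rw [eLcm_eq_indicator, eLcm_eq_indicator]
  exact ⟨Set.indicator_one_inj ℕ, congrArg (Set.indicator · 1)⟩

namespace IsScarf

variable {H : SimpleGraph V} {σ τ : Finset (Sym2 V)}

lemma eq_of_coveredVerts_eq (hσ : IsScarf H σ) (hτ : ∀ e ∈ τ, e ∈ H.edgeSet)
    (h : coveredVerts τ = coveredVerts σ) : τ = σ :=
  hσ.2 τ hτ (eLcm_eq_eLcm_iff.2 h)

lemma exists_mem_notMem_coveredVerts_erase (hσ : IsScarf H σ) {e : Sym2 V} (he : e ∈ σ) :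
    ∃ x ∈ e, x ∉ coveredVerts (σ.erase e) := by
  by_contra! h
  have hcov : coveredVerts (σ.erase e) = coveredVerts σ := by
    refine (coveredVerts_mono (erase_subset e σ)).antisymm fun x ⟨f, hf, hxf⟩ => ?_
    by_cases hfe : f = e
    · exact h x (hfe ▸ hxf)
    · exact ⟨f, mem_erase.2 ⟨hfe, hf⟩, hxf⟩
  have := hσ.eq_of_coveredVerts_eq (fun f hf => hσ.1 f (mem_of_mem_erase hf)) hcov
  exact notMem_erase e σ (by rwa [this])

lemma eq_of_coveredVerts_eq_off (hσ : IsScarf H σ) (hτ : ∀ e ∈ τ, e ∈ H.edgeSet) {w : V}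
    (hw : w ∈ coveredVerts σ) (hcov : ∀ x, x ≠ w → (x ∈ coveredVerts τ ↔ x ∈ coveredVerts σ))
    (hσw : ∀ u, s(w, u) ∈ σ → ∀ f ∈ σ, u ∈ f → w ∈ f) : τ = σ := by
  by_cases hwτ : w ∈ coveredVerts τ
  · refine hσ.eq_of_coveredVerts_eq hτ (Set.ext fun x => ?_)
    by_cases hx : x = w
    · subst hx; exact iff_of_true hwτ hw
    · exact hcov x hx
  -- Otherwise adding the edge `wu` of `σ` to `τ` gives `σ`, so the edge of `τ` covering `u` lies
  -- in `σ` and avoids `w`.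
  exfalso
  obtain ⟨e, he, hwe⟩ := hw
  obtain ⟨u, rfl⟩ := Sym2.mem_iff_exists.1 hwe
  have hins : insert s(w, u) τ = σ := by
    refine hσ.eq_of_coveredVerts_eq (fun f hf => ?_) (Set.ext fun x => ?_)
    · rcases mem_insert.1 hf with rfl | hf
      exacts [hσ.1 _ he, hτ f hf]
    rw [mem_coveredVerts_insert]
    by_cases hx : x = w
    · subst hx; exact iff_of_true (Or.inl hwe) ⟨_, he, hwe⟩
    · rw [hcov x hx, or_iff_right_of_imp fun hxe => ⟨_, he, hxe⟩]
  have huw : u ≠ w := (H.ne_of_adj (hσ.1 _ he)).symm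
  obtain ⟨f, hf, huf⟩ := (hcov u huw).2 ⟨_, he, Sym2.mem_mk_right w u⟩
  exact hwτ ⟨f, hf, hσw u he f (hins ▸ mem_insert_of_mem hf) huf⟩

end IsScarf

end DecidableEq

section Graph

variable {G : SimpleGraph V} {v : V}

lemma notMem_of_mem_edgeSet_delVert {e : Sym2 V} (he : e ∈ (delVert G v).edgeSet) : v ∉ e := by
  induction e using Sym2.ind with
  | _ a b =>
    intro hv
    rcases Sym2.mem_iff.1 hv with rfl | rfl
    exacts [he.2.1 rfl, he.2.2 rfl]

lemma notMem_coveredVerts_of_subset_delVert {σ : Finset (Sym2 V)}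
    (hσ : ∀ e ∈ σ, e ∈ (delVert G v).edgeSet) : v ∉ coveredVerts σ :=
  fun ⟨e, he, hv⟩ => notMem_of_mem_edgeSet_delVert (hσ e he) hv

lemma mem_of_not_dist1 {e : Sym2 V} {u w : V} (h : ¬ Dist1 G e s(v, w)) (hv : v ∉ e)
    (hu : u ∈ e) (huw : G.Adj u w) : w ∈ e := by
  by_contra hw
  refine h ⟨fun ⟨x, hxe, hx⟩ => ?_, u, hu, w, Sym2.mem_mk_right v w, huw⟩
  rcases Sym2.mem_iff.1 hx with rfl | rfl
  exacts [hv hxe, hw hxe]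

variable {W : Finset V} {e : Sym2 V}

lemma mem_edgeSet_addBack :
    e ∈ (addBack G v W).edgeSet ↔
      e ∈ (delVert G v).edgeSet ∨ ∃ w ∈ W, v ≠ w ∧ e = s(v, w) := by
  rw [addBack, SimpleGraph.edgeSet_fromEdgeSet]
  constructor
  · rintro ⟨he | ⟨w, hw, rfl⟩, hd⟩
    exacts [Or.inl he, Or.inr ⟨w, hw, Sym2.mk_isDiag_iff.not.1 hd, rfl⟩]
  · rintro (he | ⟨w, hw, hvw, rfl⟩)
    exacts [⟨Or.inl he, SimpleGraph.not_isDiag_of_mem_edgeSet _ he⟩,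
      ⟨Or.inr ⟨w, hw, rfl⟩, Sym2.mk_isDiag_iff.not.2 hvw⟩]

lemma mem_edgeSet_addBack_of_mem_delVert (he : e ∈ (delVert G v).edgeSet) :
    e ∈ (addBack G v W).edgeSet :=
  mem_edgeSet_addBack.2 (Or.inl he)

lemma mk_mem_edgeSet_addBack {w : V} (hw : w ∈ W) (hvw : v ≠ w) :
    s(v, w) ∈ (addBack G v W).edgeSet :=
  mem_edgeSet_addBack.2 (Or.inr ⟨w, hw, hvw, rfl⟩)

lemma mem_edgeSet_delVert_of_mem_addBack (he : e ∈ (addBack G v W).edgeSet) (hv : v ∉ e) :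
    e ∈ (delVert G v).edgeSet := by
  rcases mem_edgeSet_addBack.1 he with he | ⟨w, -, -, rfl⟩
  exacts [he, absurd (Sym2.mem_mk_left v w) hv]

lemma exists_eq_of_mem_edgeSet_addBack (he : e ∈ (addBack G v W).edgeSet) (hv : v ∈ e) :
    ∃ w ∈ W, e = s(v, w) := by
  obtain he | ⟨w, hw, -, rfl⟩ := mem_edgeSet_addBack.1 he
  exacts [absurd hv (notMem_of_mem_edgeSet_delVert he), ⟨w, hw, rfl⟩]

end Graph

lemma isScarf_addBack_singleton [DecidableEq V] {G : SimpleGraph V} {v w : V}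
    {σ : Finset (Sym2 V)} (hσ : IsScarf (delVert G v) σ) (hw : w ∈ coveredVerts σ)
    (hdist : ∀ e ∈ σ, ¬ Dist1 G e s(v, w)) :
    IsScarf (addBack G v {w}) (insert s(v, w) σ) := by
  have hvσ := notMem_coveredVerts_of_subset_delVert hσ.1
  have hvw : v ≠ w := fun h => hvσ (h ▸ hw)
  have hσw : ∀ u, s(w, u) ∈ σ → ∀ f ∈ σ, u ∈ f → w ∈ f := fun u hu f hf huf =>
    mem_of_not_dist1 (hdist f hf) (notMem_of_mem_edgeSet_delVert (hσ.1 f hf)) huf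
      (hσ.1 _ hu).1.symm
  refine ⟨fun e he => ?_, fun τ hτ hlcm => ?_⟩
  · rcases mem_insert.1 he with rfl | he
    exacts [mk_mem_edgeSet_addBack (mem_singleton_self w) hvw,
      mem_edgeSet_addBack_of_mem_delVert (hσ.1 e he)]
  rw [eLcm_eq_eLcm_iff] at hlcm
  have hvwτ : s(v, w) ∈ τ := by
    obtain ⟨f, hf, hvf⟩ : v ∈ coveredVerts τ :=
      hlcm ▸ mem_coveredVerts_insert.2 (Or.inl (Sym2.mem_mk_left v w))
    obtain ⟨w', hw', rfl⟩ := exists_eq_of_mem_edgeSet_addBack (hτ f hf) hvf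
    rwa [← mem_singleton.1 hw']
  have hτ' : ∀ e ∈ τ.erase s(v, w), e ∈ (delVert G v).edgeSet := fun e he => by
    obtain ⟨hne, he⟩ := mem_erase.1 he
    refine mem_edgeSet_delVert_of_mem_addBack (hτ e he) fun hv => hne ?_
    obtain ⟨w', hw', rfl⟩ := exists_eq_of_mem_edgeSet_addBack (hτ e he) hv
    rw [mem_singleton.1 hw']
  have hcov : ∀ x, x ≠ w → (x ∈ coveredVerts (τ.erase s(v, w)) ↔ x ∈ coveredVerts σ) := by
    intro x hxw
    by_cases hxv : x = v
    · subst hxv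
      exact iff_of_false (notMem_coveredVerts_of_subset_delVert hτ') hvσ
    have hx : x ∉ s(v, w) := by simp [hxv, hxw]
    rw [mem_coveredVerts_erase hx, hlcm, mem_coveredVerts_insert, or_iff_right hx]
  rw [← hσ.eq_of_coveredVerts_eq_off hτ' hw hcov hσw, insert_erase hvwτ]

lemma card_eq_one_of_isScarf_union_image [DecidableEq V] {H : SimpleGraph V} {v w : V}
    {W : Finset V} {σ : Finset (Sym2 V)} (hF : IsScarf H (σ ∪ W.image (fun w => s(v, w))))
    (hwW : w ∈ W) (hwσ : w ∈ coveredVerts σ) (hvσ : v ∉ coveredVerts σ) : W.card = 1 := by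
  by_contra hcard
  have hW : 1 < W.card := by have := card_pos.2 ⟨w, hwW⟩; omega
  obtain ⟨w', hw'W, hw'w⟩ := exists_mem_ne hW w
  obtain ⟨y, hy, hyfree⟩ :=
    hF.exists_mem_notMem_coveredVerts_erase (mem_union_right σ (mem_image_of_mem _ hwW))
  refine hyfree ?_
  rcases Sym2.mem_iff.1 hy with rfl | rfl
  · refine ⟨s(y, w'), mem_erase.2 ⟨?_, mem_union_right σ (mem_image_of_mem _ hw'W)⟩,
      Sym2.mem_mk_left y w'⟩
    exact fun h => hw'w (Sym2.congr_right.1 h)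
  · obtain ⟨f, hf, hyf⟩ := hwσ
    refine ⟨f, mem_erase.2 ⟨fun hfe => hvσ ⟨f, hf, ?_⟩, mem_union_left _ hf⟩, hyf⟩
    exact hfe ▸ Sym2.mem_mk_left v y

end

theorem stmt8_general {V : Type*} [DecidableEq V] (G : SimpleGraph V) (v : V)
    (W : Finset V) (σ : Finset (Sym2 V)) (hσ : IsScarf (delVert G v) σ)
    (h0 : ∃ w ∈ W, ∃ e ∈ σ, Dist0 e s(v, w))
    (h1 : ∀ e ∈ σ, ∀ w ∈ W, ¬ Dist1 G e s(v, w)) :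
    IsScarf (addBack G v W) (σ ∪ W.image (fun w => s(v, w))) ↔ W.card = 1 := by
  obtain ⟨w, hwW, e, heσ, x, hxe, hx⟩ := h0
  have hvσ := notMem_coveredVerts_of_subset_delVert hσ.1
  have hwσ : w ∈ coveredVerts σ := by
    rcases Sym2.mem_iff.1 hx with rfl | rfl
    exacts [absurd ⟨e, heσ, hxe⟩ hvσ, ⟨e, heσ, hxe⟩]
  refine ⟨fun hF => card_eq_one_of_isScarf_union_image hF hwW hwσ hvσ, fun hcard => ?_⟩
  obtain ⟨a, rfl⟩ := Finset.card_eq_one.1 hcard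
  obtain rfl := Finset.mem_singleton.1 hwW
  rw [Finset.image_singleton, Finset.union_comm, ← Finset.insert_eq]
  exact isScarf_addBack_singleton hσ hwσ fun e he => h1 e he w hwW

theorem stmt8 {V : Type*} [Fintype V] [DecidableEq V] (G : SimpleGraph V) (v : V)
    (W : Finset V) (hW : ∀ w ∈ W, G.Adj v w) (hWne : W.Nonempty)
    (σ : Finset (Sym2 V)) (hσ : IsScarf (delVert G v) σ)
    (h0 : ∃ w ∈ W, ∃ e ∈ σ, Dist0 e s(v, w))
    (h1 : ∀ e ∈ σ, ∀ w ∈ W, ¬ Dist1 G e s(v, w)) :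
    IsScarf (addBack G v W) (σ ∪ W.image (fun w => s(v, w))) ↔ W.card = 1 :=
  stmt8_general G v W σ hσ h0 h1
end
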